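/- arXiv:1804.03349 — 6 statements merged into one kernel-verified Lean document; each statement's English description precedes it below -/
import Mathlib

section
/- Let T* be a {0,1}-valued random variable with 0 < Pr(T*=1) < 1, and let T be a {0,1}-valued random variable with misclassification probabilities m0 = Pr(T=1 | T*=0) and m1 = Pr(T=0 | T*=1). Define the measurement error U_T = T - T*. Then Cov(U_T, T*) = -(m0 + m1) · Pr(T*=0) · Pr(T*=1). -/
open MeasureTheory ProbabilityTheory

theorem cov_measurement_error_treatment
    {Ω : Type*} [MeasurableSpace Ω] (μ : Measure Ω) [IsProbabilityMeasure μ]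
    (T Ts : Ω → ℝ) (hT : Measurable T) (hTs : Measurable Ts)
    (hTval : ∀ ω, T ω = 0 ∨ T ω = 1) (hTsval : ∀ ω, Ts ω = 0 ∨ Ts ω = 1)
    (h0 : 0 < (μ {ω | Ts ω = 1}).toReal) (h1 : (μ {ω | Ts ω = 1}).toReal < 1)
    (m0 m1 : ℝ)
    (hm0 : m0 = ((μ[|{ω | Ts ω = 0}]) {ω | T ω = 1}).toReal)
    (hm1 : m1 = ((μ[|{ω | Ts ω = 1}]) {ω | T ω = 0}).toReal) :
    (∫ ω, (T ω - Ts ω) * Ts ω ∂μ) - (∫ ω, (T ω - Ts ω) ∂μ) * (∫ ω, Ts ω ∂μ)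
      = -(m0 + m1) * (μ {ω | Ts ω = 0}).toReal * (μ {ω | Ts ω = 1}).toReal := by
  set A : Set Ω := {ω | T ω = 1} with hAdef
  set B : Set Ω := {ω | Ts ω = 1} with hBdef
  have hA : MeasurableSet A := hT (measurableSet_singleton 1)
  have hB : MeasurableSet B := hTs (measurableSet_singleton 1)
  have hBc : {ω | Ts ω = 0} = Bᶜ := by
    ext ω; rcases hTsval ω with h | h <;> simp [hBdef, h]
  have hAc : {ω | T ω = 0} = Aᶜ := by
    ext ω; rcases hTval ω with h | h <;> simp [hAdef, h]
  -- indicator representations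
  have hTind : T = A.indicator (fun _ => (1:ℝ)) := by
    funext ω; rcases hTval ω with h | h <;> simp [Set.indicator_apply, hAdef, h]
  have hTsind : Ts = B.indicator (fun _ => (1:ℝ)) := by
    funext ω; rcases hTsval ω with h | h <;> simp [Set.indicator_apply, hBdef, h]
  have hTTsind : (fun ω => T ω * Ts ω) = (A ∩ B).indicator (fun _ => (1:ℝ)) := by
    funext ω
    rcases hTval ω with h | h <;> rcases hTsval ω with h' | h' <;>
      simp [Set.indicator_apply, hAdef, hBdef, h, h']
  have iT : Integrable T μ := by
    rw [hTind]; exact (integrable_const 1).indicator hA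
  have iTs : Integrable Ts μ := by
    rw [hTsind]; exact (integrable_const 1).indicator hB
  have iTTs : Integrable (fun ω => T ω * Ts ω) μ := by
    rw [hTTsind]; exact (integrable_const 1).indicator (hA.inter hB)
  have IT : ∫ ω, T ω ∂μ = (μ A).toReal := by
    rw [hTind, integral_indicator_const (1:ℝ) hA]; simp [Measure.real]
  have ITs : ∫ ω, Ts ω ∂μ = (μ B).toReal := by
    rw [hTsind, integral_indicator_const (1:ℝ) hB]; simp [Measure.real]
  have ITTs : ∫ ω, T ω * Ts ω ∂μ = (μ (A ∩ B)).toReal := by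
    rw [hTTsind, integral_indicator_const (1:ℝ) (hA.inter hB)]; simp [Measure.real]
  -- Ts * Ts = Ts
  have hsq : ∀ ω, (T ω - Ts ω) * Ts ω = T ω * Ts ω - Ts ω := by
    intro ω; rcases hTsval ω with h | h <;> simp [h]
  have I1 : ∫ ω, (T ω - Ts ω) * Ts ω ∂μ = (μ (A ∩ B)).toReal - (μ B).toReal := by
    rw [show (fun ω => (T ω - Ts ω) * Ts ω) = fun ω => T ω * Ts ω - Ts ω from funext hsq,
      integral_sub iTTs iTs, ITTs, ITs]
  have I2 : ∫ ω, (T ω - Ts ω) ∂μ = (μ A).toReal - (μ B).toReal := by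
    rw [integral_sub iT iTs, IT, ITs]
  set p := (μ B).toReal with hp
  set a := (μ (A ∩ B)).toReal with ha
  set t := (μ A).toReal with ht
  set q := (μ Bᶜ).toReal with hq
  have hpq : q = 1 - p := by
    rw [hq, hp, measure_compl hB (measure_ne_top μ B), measure_univ,
      ENNReal.toReal_sub_of_le prob_le_one ENNReal.one_ne_top, ENNReal.toReal_one]
  have hqpos : 0 < q := by rw [hpq]; linarith
  -- m1
  have hBA : B ∩ Aᶜ = B \ (A ∩ B) := by ext ω; simp only [Set.mem_inter_iff, Set.mem_compl_iff, Set.mem_diff]; tauto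
  have hAB : Bᶜ ∩ A = A \ (A ∩ B) := by ext ω; simp only [Set.mem_inter_iff, Set.mem_compl_iff, Set.mem_diff]; tauto
  have hsub1 : μ (A ∩ B) ≤ μ B := measure_mono Set.inter_subset_right
  have hsub2 : μ (A ∩ B) ≤ μ A := measure_mono Set.inter_subset_left
  have hm1' : m1 = p⁻¹ * (p - a) := by
    rw [hm1, hAc, cond_apply hB, hBA,
      measure_diff Set.inter_subset_right (hA.inter hB).nullMeasurableSet
        (measure_ne_top μ _),
      ENNReal.toReal_mul, ENNReal.toReal_inv,
      ENNReal.toReal_sub_of_le hsub1 (measure_ne_top μ _)]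
  have hm0' : m0 = q⁻¹ * (t - a) := by
    rw [hm0, hBc, cond_apply hB.compl, hAB,
      measure_diff Set.inter_subset_left (hA.inter hB).nullMeasurableSet
        (measure_ne_top μ _),
      ENNReal.toReal_mul, ENNReal.toReal_inv,
      ENNReal.toReal_sub_of_le hsub2 (measure_ne_top μ _)]
  rw [I1, I2, ITs, hBc, hm0', hm1']
  rw [← hq, hpq]
  have hne : p ≠ 0 := ne_of_gt h0
  have hne1 : 1 - p ≠ 0 := by intro h; rw [hpq] at hqpos; linarith
  field_simp
  ring
end

section
/- Suppose the misclassification probabilities do not depend on Z: m_t = m_{t0} = m_{t1} for t = 0,1, with s = 1 - m_0 - m_1 ≠ 0, and Δp* = p*_1 - p*_0 ≠ 0. Then the naive IV estimand β = (μ_1 - μ_0)/(p_1 - p_0) satisfies β = β*/s, where β* = (μ_1 - μ_0)/(p*_1 - p*_0). In particular, if 0 < s ≤ 1 then |β*| ≤ |β|. -/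
theorem naive_iv_bias
    (μ0 μ1 p0 p1 ps0 ps1 m0 m1 : ℝ)
    (hp0 : p0 = m0 + (1 - m0 - m1) * ps0)
    (hp1 : p1 = m0 + (1 - m0 - m1) * ps1)
    (hs : 1 - m0 - m1 ≠ 0)
    (hps : ps1 ≠ ps0)
    (β βstar : ℝ)
    (hβ : β = (μ1 - μ0) / (p1 - p0))
    (hβstar : βstar = (μ1 - μ0) / (ps1 - ps0)) :
    β = βstar / (1 - m0 - m1)
    ∧ (0 < 1 - m0 - m1 → 1 - m0 - m1 ≤ 1 → |βstar| ≤ |β|) := by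
  have hd : ps1 - ps0 ≠ 0 := sub_ne_zero.mpr hps
  have hpp : p1 - p0 = (1 - m0 - m1) * (ps1 - ps0) := by rw [hp0, hp1]; ring
  have key : β = βstar / (1 - m0 - m1) := by
    rw [hβ, hβstar, hpp, div_div, mul_comm]
  refine ⟨key, fun h1 h2 => ?_⟩
  rw [key, abs_div]
  rw [abs_of_pos h1]
  rcases eq_or_ne βstar 0 with h | h
  · simp [h]
  · rw [le_div_iff₀ h1]
    nlinarith [abs_pos.mpr h]
end

section
/- Let Y be an integrable random variable and T, T*, W random variables with T, T* valued in {0,1}, such that E(Y | T, T*, W) = E(Y | T*, W) (non-differential measurement error). Then E(Y | T=1, W) - E(Y | T=0, W) = [E(T* | T=1, W) - E(T* | T=0, W)] · [E(Y | T*=1, W) - E(Y | T*=0, W)], whenever all conditional expectations are well-defined. -/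
open MeasureTheory ProbabilityTheory

/-- Conditional mean of `Y` given an event `s`. -/
noncomputable def condMean {Ω : Type*} [MeasurableSpace Ω] (μ : Measure Ω)
    (Y : Ω → ℝ) (s : Set Ω) : ℝ :=
  (∫ ω in s, Y ω ∂μ) / (μ s).toReal

theorem nondifferential_error_tau_decomposition
    {Ω : Type*} [MeasurableSpace Ω] (μ : Measure Ω) [IsProbabilityMeasure μ]
    {α : Type*} [MeasurableSpace α]
    (Y : Ω → ℝ) (T Ts : Ω → ℝ) (W : Ω → α)
    (hY : Integrable Y μ) (hT : Measurable T) (hTs : Measurable Ts) (hW : Measurable W)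
    (hTval : ∀ ω, T ω = 0 ∨ T ω = 1) (hTsval : ∀ ω, Ts ω = 0 ∨ Ts ω = 1)
    (w : α)
    -- every joint cell has positive probability
    (hcells : ∀ t ts : ℝ, (t = 0 ∨ t = 1) → (ts = 0 ∨ ts = 1) →
      0 < μ ({ω | T ω = t} ∩ {ω | Ts ω = ts} ∩ {ω | W ω = w}))
    -- non-differential measurement error: E(Y | T = t, T* = ts, W = w) = E(Y | T* = ts, W = w)
    (hnondif : ∀ t ts : ℝ, (t = 0 ∨ t = 1) → (ts = 0 ∨ ts = 1) →
      condMean μ Y ({ω | T ω = t} ∩ {ω | Ts ω = ts} ∩ {ω | W ω = w})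
        = condMean μ Y ({ω | Ts ω = ts} ∩ {ω | W ω = w})) :
    condMean μ Y ({ω | T ω = 1} ∩ {ω | W ω = w})
      - condMean μ Y ({ω | T ω = 0} ∩ {ω | W ω = w})
    = (condMean μ Ts ({ω | T ω = 1} ∩ {ω | W ω = w})
        - condMean μ Ts ({ω | T ω = 0} ∩ {ω | W ω = w}))
      * (condMean μ Y ({ω | Ts ω = 1} ∩ {ω | W ω = w})
        - condMean μ Y ({ω | Ts ω = 0} ∩ {ω | W ω = w})) := by
  classical
  set C : Set Ω := {ω | Ts ω = 1} with hC_def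
  have hCmeas : MeasurableSet C := hTs (measurableSet_singleton 1)
  have hCcompl : Cᶜ = {ω | Ts ω = 0} := by
    ext ω; rcases hTsval ω with h | h <;> simp [hC_def, h]
  -- measure splitting along C
  have hsplitμ : ∀ s : Set Ω,
      (μ s).toReal = (μ (s ∩ C)).toReal + (μ (s ∩ Cᶜ)).toReal := by
    intro s
    rw [← ENNReal.toReal_add (measure_ne_top μ _) (measure_ne_top μ _)]
    congr 1
    rw [Set.inter_comm s C, Set.inter_comm s Cᶜ,
      ← Measure.restrict_apply hCmeas, ← Measure.restrict_apply hCmeas.compl,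
      measure_add_measure_compl hCmeas, Measure.restrict_apply_univ]
  -- integral splitting along C
  have hsplitI : ∀ (f : Ω → ℝ), Integrable f μ → ∀ s : Set Ω,
      ∫ ω in s, f ω ∂μ = (∫ ω in s ∩ C, f ω ∂μ) + ∫ ω in s ∩ Cᶜ, f ω ∂μ := by
    intro f hf s
    have h := integral_add_compl hCmeas (hf.restrict (s := s))
    rw [Measure.restrict_restrict hCmeas, Measure.restrict_restrict hCmeas.compl] at h
    rw [← h, Set.inter_comm C s, Set.inter_comm Cᶜ s]
  -- Ts as indicator of C
  have hTsInd : ∀ s : Set Ω, ∫ ω in s, Ts ω ∂μ = (μ (s ∩ C)).toReal := by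
    intro s
    have h1 : (fun ω => Ts ω) = C.indicator (fun _ => (1:ℝ)) := by
      ext ω; rcases hTsval ω with h | h <;>
        simp [hC_def, Set.indicator, h]
    rw [h1, setIntegral_indicator hCmeas, setIntegral_const, smul_eq_mul, mul_one]
    rfl
  -- cell masses
  set a : ℝ → ℝ → ℝ := fun t ts =>
    (μ ({ω | T ω = t} ∩ {ω | Ts ω = ts} ∩ {ω | W ω = w})).toReal with ha_def
  have hapos : ∀ t ts : ℝ, (t = 0 ∨ t = 1) → (ts = 0 ∨ ts = 1) → 0 < a t ts := by
    intro t ts ht hts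
    exact ENNReal.toReal_pos (hcells t ts ht hts).ne' (measure_ne_top μ _)
  -- basic set identities
  have hAC : ∀ t : ℝ, ({ω | T ω = t} ∩ {ω | W ω = w}) ∩ C
      = {ω | T ω = t} ∩ {ω | Ts ω = 1} ∩ {ω | W ω = w} := by
    intro t; ext ω; simp [hC_def, Set.mem_inter_iff]; tauto
  have hACc : ∀ t : ℝ, ({ω | T ω = t} ∩ {ω | W ω = w}) ∩ Cᶜ
      = {ω | T ω = t} ∩ {ω | Ts ω = 0} ∩ {ω | W ω = w} := by
    intro t; rw [hCcompl]; ext ω; simp [Set.mem_inter_iff]; tauto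
  -- masses of the T-slices
  have hmass : ∀ t : ℝ, (μ ({ω | T ω = t} ∩ {ω | W ω = w})).toReal = a t 0 + a t 1 := by
    intro t
    rw [hsplitμ ({ω | T ω = t} ∩ {ω | W ω = w}), hAC, hACc]
    ring
  -- conditional means m 0 and m 1
  set m : ℝ → ℝ := fun ts => condMean μ Y ({ω | Ts ω = ts} ∩ {ω | W ω = w}) with hm_def
  -- integral of Y over each cell
  have hcellI : ∀ t ts : ℝ, (t = 0 ∨ t = 1) → (ts = 0 ∨ ts = 1) →
      ∫ ω in {ω | T ω = t} ∩ {ω | Ts ω = ts} ∩ {ω | W ω = w}, Y ω ∂μ = m ts * a t ts := by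
    intro t ts ht hts
    have hne := (hapos t ts ht hts).ne'
    have h := hnondif t ts ht hts
    rw [condMean, div_eq_iff hne] at h
    simpa [hm_def, mul_comm] using h
  -- integral of Y over T-slices
  have hYI : ∀ t : ℝ, (t = 0 ∨ t = 1) →
      ∫ ω in {ω | T ω = t} ∩ {ω | W ω = w}, Y ω ∂μ = m 0 * a t 0 + m 1 * a t 1 := by
    intro t ht
    rw [hsplitI Y hY, hAC, hACc, hcellI t 0 ht (Or.inl rfl), hcellI t 1 ht (Or.inr rfl)]
    ring
  -- integral of Ts over T-slices
  have hTsI : ∀ t : ℝ, ∫ ω in {ω | T ω = t} ∩ {ω | W ω = w}, Ts ω ∂μ = a t 1 := by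
    intro t
    rw [hTsInd, hAC]
  -- put everything together
  have h0 : (0:ℝ) < a 0 0 := hapos 0 0 (Or.inl rfl) (Or.inl rfl)
  have h1 : (0:ℝ) < a 0 1 := hapos 0 1 (Or.inl rfl) (Or.inr rfl)
  have h2 : (0:ℝ) < a 1 0 := hapos 1 0 (Or.inr rfl) (Or.inl rfl)
  have h3 : (0:ℝ) < a 1 1 := hapos 1 1 (Or.inr rfl) (Or.inr rfl)
  have e1 : condMean μ Y ({ω | T ω = 1} ∩ {ω | W ω = w})
      = (m 0 * a 1 0 + m 1 * a 1 1) / (a 1 0 + a 1 1) := by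
    rw [condMean, hYI 1 (Or.inr rfl), hmass]
  have e0 : condMean μ Y ({ω | T ω = 0} ∩ {ω | W ω = w})
      = (m 0 * a 0 0 + m 1 * a 0 1) / (a 0 0 + a 0 1) := by
    rw [condMean, hYI 0 (Or.inl rfl), hmass]
  have f1 : condMean μ Ts ({ω | T ω = 1} ∩ {ω | W ω = w})
      = a 1 1 / (a 1 0 + a 1 1) := by
    rw [condMean, hTsI, hmass]
  have f0 : condMean μ Ts ({ω | T ω = 0} ∩ {ω | W ω = w})
      = a 0 1 / (a 0 0 + a 0 1) := by
    rw [condMean, hTsI, hmass]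
  rw [e1, e0, f1, f0]
  show _ = _ * (m 1 - m 0)
  field_simp
  ring
end

section
/- Let Y, T, T* be random variables as above with non-differential error E(Y|T,T*,W)=E(Y|T*,W), misclassification probabilities m_{0W}, m_{1W} with 1 - m_{0W} - m_{1W} ≠ 0, and 0 < p_W < 1. Then τ_W = M(m_{0W}, m_{1W}, p_W) · τ*_W, where M(m_0, m_1, p) = (1/(1-m_0-m_1)) · (1 - m_0(1-m_1)/p - (1-m_0)m_1/(1-p)), τ_W = E(Y|T=1,W) - E(Y|T=0,W), and τ*_W = E(Y|T*=1,W) - E(Y|T*=0,W). -/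
open MeasureTheory ProbabilityTheory

/-- The multiplicative bias factor `M(m₀, m₁, p)`. -/
noncomputable def Mfactor (m0 m1 p : ℝ) : ℝ :=
  (1 / (1 - m0 - m1)) * (1 - m0 * (1 - m1) / p - (1 - m0) * m1 / (1 - p))

lemma alg_key (a b c d y0 y1 : ℝ) (ha : 0 < a) (hb : 0 < b) (hc : 0 < c) (hd : 0 < d)
    (hdet : 1 - c/(a+c) - b/(b+d) ≠ 0) :
    (y0*c + y1*d)/(c+d) - (y0*a + y1*b)/(a+b)
      = Mfactor (c/(a+c)) (b/(b+d)) ((c+d)/(a+b+c+d)) * (y1 - y0) := by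
  have hac : a + c ≠ 0 := by positivity
  have hbd : b + d ≠ 0 := by positivity
  have hab : a + b ≠ 0 := by positivity
  have hcd : c + d ≠ 0 := by positivity
  have hS : a + b + c + d ≠ 0 := by positivity
  have hrw : 1 - c/(a+c) - b/(b+d) = (a*d - b*c)/((a+c)*(b+d)) := by
    field_simp; ring
  have hdet' : a*d - b*c ≠ 0 := by
    intro h; exact hdet (by rw [hrw, h, zero_div])
  have hrp : 1 - (c+d)/(a+b+c+d) = (a+b)/(a+b+c+d) := by
    field_simp
    ring
  unfold Mfactor
  rw [hrw, hrp]
  have hdet'' : d*a - c*b ≠ 0 := by rwa [mul_comm d, mul_comm c]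
  field_simp
  ring

theorem tau_equals_M_tau_star
    {Ω : Type*} [MeasurableSpace Ω] (μ : Measure Ω) [IsProbabilityMeasure μ]
    {α : Type*} [MeasurableSpace α]
    (Y : Ω → ℝ) (T Ts : Ω → ℝ) (W : Ω → α)
    (hY : Integrable Y μ) (hT : Measurable T) (hTs : Measurable Ts) (hW : Measurable W)
    (hTval : ∀ ω, T ω = 0 ∨ T ω = 1) (hTsval : ∀ ω, Ts ω = 0 ∨ Ts ω = 1)
    (w : α)
    (hcells : ∀ t ts : ℝ, (t = 0 ∨ t = 1) → (ts = 0 ∨ ts = 1) →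
      0 < μ ({ω | T ω = t} ∩ {ω | Ts ω = ts} ∩ {ω | W ω = w}))
    -- non-differential measurement error
    (hnondif : ∀ t ts : ℝ, (t = 0 ∨ t = 1) → (ts = 0 ∨ ts = 1) →
      condMean μ Y ({ω | T ω = t} ∩ {ω | Ts ω = ts} ∩ {ω | W ω = w})
        = condMean μ Y ({ω | Ts ω = ts} ∩ {ω | W ω = w}))
    (m0W m1W pW : ℝ)
    (hm0 : m0W = ((μ[|{ω | Ts ω = 0} ∩ {ω | W ω = w}]) {ω | T ω = 1}).toReal)
    (hm1 : m1W = ((μ[|{ω | Ts ω = 1} ∩ {ω | W ω = w}]) {ω | T ω = 0}).toReal)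
    (hpW : pW = ((μ[|{ω | W ω = w}]) {ω | T ω = 1}).toReal)
    (hs : 1 - m0W - m1W ≠ 0) (hpW0 : 0 < pW) (hpW1 : pW < 1) :
    condMean μ Y ({ω | T ω = 1} ∩ {ω | W ω = w})
      - condMean μ Y ({ω | T ω = 0} ∩ {ω | W ω = w})
    = Mfactor m0W m1W pW
      * (condMean μ Y ({ω | Ts ω = 1} ∩ {ω | W ω = w})
        - condMean μ Y ({ω | Ts ω = 0} ∩ {ω | W ω = w})) := by
  classical
  have mT : ∀ t : ℝ, MeasurableSet {ω | T ω = t} := fun t => hT (measurableSet_singleton t)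
  have mTs : ∀ t : ℝ, MeasurableSet {ω | Ts ω = t} := fun t => hTs (measurableSet_singleton t)
  set Wb : Set Ω := {ω | W ω = w} with hWbdef
  set ν : Measure Ω := μ.restrict Wb with hνdef
  -- transporting measures of intersections with Wb to ν
  have hmeas : ∀ X : Set Ω, MeasurableSet X → μ (X ∩ Wb) = ν X := by
    intro X hX
    rw [hνdef, Measure.restrict_apply hX]
  -- transporting set integrals
  have hint : ∀ X : Set Ω, MeasurableSet X →
      (∫ ω in (X ∩ Wb), Y ω ∂μ) = ∫ ω in X, Y ω ∂ν := by
    intro X hX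
    rw [hνdef, Measure.restrict_restrict hX]
  have hcm : ∀ X : Set Ω, MeasurableSet X →
      condMean μ Y (X ∩ Wb) = (∫ ω in X, Y ω ∂ν) / (ν X).toReal := by
    intro X hX
    unfold condMean
    rw [hint X hX, hmeas X hX]
  have hYν : Integrable Y ν := hY.restrict
  -- cell masses
  set q : ℝ → ℝ → ℝ :=
    fun t s => (ν ({ω | T ω = t} ∩ {ω | Ts ω = s})).toReal with hqdef
  have hνcell : ∀ t s : ℝ, μ ({ω | T ω = t} ∩ {ω | Ts ω = s} ∩ Wb)
      = ν ({ω | T ω = t} ∩ {ω | Ts ω = s}) :=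
    fun t s => hmeas _ ((mT t).inter (mTs s))
  have hqpos : ∀ t s : ℝ, (t = 0 ∨ t = 1) → (s = 0 ∨ s = 1) → 0 < q t s := by
    intro t s ht hs'
    have := hcells t s ht hs'
    rw [hνcell t s] at this
    exact ENNReal.toReal_pos this.ne' (measure_ne_top ν _)
  -- splitting a T-slice by Ts
  have huT : ∀ t : ℝ, {ω | T ω = t}
      = ({ω | T ω = t} ∩ {ω | Ts ω = 0}) ∪ ({ω | T ω = t} ∩ {ω | Ts ω = 1}) := by
    intro t
    ext ω
    simp only [Set.mem_inter_iff, Set.mem_union, Set.mem_setOf_eq]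
    rcases hTsval ω with h | h <;> simp [h]
  have hdT : ∀ t : ℝ, Disjoint ({ω | T ω = t} ∩ {ω | Ts ω = 0})
      ({ω | T ω = t} ∩ {ω | Ts ω = 1}) := by
    intro t
    refine Set.disjoint_left.mpr ?_
    rintro ω ⟨-, h0⟩ ⟨-, h1⟩
    have h0' : Ts ω = 0 := h0
    have h1' : Ts ω = 1 := h1
    linarith
  -- splitting a Ts-slice by T
  have huTs : ∀ s : ℝ, {ω | Ts ω = s}
      = ({ω | T ω = 0} ∩ {ω | Ts ω = s}) ∪ ({ω | T ω = 1} ∩ {ω | Ts ω = s}) := by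
    intro s
    ext ω
    simp only [Set.mem_inter_iff, Set.mem_union, Set.mem_setOf_eq]
    rcases hTval ω with h | h <;> simp [h]
  have hdTs : ∀ s : ℝ, Disjoint ({ω | T ω = 0} ∩ {ω | Ts ω = s})
      ({ω | T ω = 1} ∩ {ω | Ts ω = s}) := by
    intro s
    refine Set.disjoint_left.mpr ?_
    rintro ω ⟨h0, -⟩ ⟨h1, -⟩
    have h0' : T ω = 0 := h0
    have h1' : T ω = 1 := h1
    linarith
  -- masses of T-slices and Ts-slices under ν
  have hmT : ∀ t : ℝ, (ν {ω | T ω = t}).toReal = q t 0 + q t 1 := by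
    intro t
    conv_lhs => rw [huT t]
    rw [measure_union (hdT t) ((mT t).inter (mTs 1)),
      ENNReal.toReal_add (measure_ne_top ν _) (measure_ne_top ν _)]
  have hmTs : ∀ s : ℝ, (ν {ω | Ts ω = s}).toReal = q 0 s + q 1 s := by
    intro s
    conv_lhs => rw [huTs s]
    rw [measure_union (hdTs s) ((mT 1).inter (mTs s)),
      ENNReal.toReal_add (measure_ne_top ν _) (measure_ne_top ν _)]
  -- total mass of ν
  have huW : (Set.univ : Set Ω) = {ω | T ω = 0} ∪ {ω | T ω = 1} := by
    ext ω
    simp only [Set.mem_union, Set.mem_setOf_eq, Set.mem_univ, true_iff]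
    exact hTval ω
  have hdW : Disjoint {ω | T ω = 0} {ω | T ω = 1} := by
    refine Set.disjoint_left.mpr ?_
    intro ω h0 h1
    have h0' : T ω = 0 := h0
    have h1' : T ω = 1 := h1
    linarith
  have hmW : (ν Set.univ).toReal = (q 0 0 + q 0 1) + (q 1 0 + q 1 1) := by
    conv_lhs => rw [huW]
    rw [measure_union hdW (mT 1),
      ENNReal.toReal_add (measure_ne_top ν _) (measure_ne_top ν _), hmT 0, hmT 1]
  -- cell integrals
  set y0 : ℝ := condMean μ Y ({ω | Ts ω = 0} ∩ Wb) with hy0def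
  set y1 : ℝ := condMean μ Y ({ω | Ts ω = 1} ∩ Wb) with hy1def
  have hcellInt : ∀ t s : ℝ, (t = 0 ∨ t = 1) → (s = 0 ∨ s = 1) →
      (∫ ω in ({ω | T ω = t} ∩ {ω | Ts ω = s}), Y ω ∂ν)
        = condMean μ Y ({ω | Ts ω = s} ∩ Wb) * q t s := by
    intro t s ht hs'
    have h := hnondif t s ht hs'
    have hq : q t s ≠ 0 := (hqpos t s ht hs').ne'
    rw [← hint _ ((mT t).inter (mTs s)), ← h]
    have : condMean μ Y ({ω | T ω = t} ∩ {ω | Ts ω = s} ∩ Wb)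
        = (∫ ω in ({ω | T ω = t} ∩ {ω | Ts ω = s} ∩ Wb), Y ω ∂μ) / q t s := by
      unfold condMean
      rw [hνcell t s]
    rw [this, div_mul_cancel₀ _ hq]
  -- conditional means of T-slices
  have hcmT : ∀ t : ℝ, (t = 0 ∨ t = 1) →
      condMean μ Y ({ω | T ω = t} ∩ Wb)
        = (y0 * q t 0 + y1 * q t 1) / (q t 0 + q t 1) := by
    intro t ht
    rw [hcm _ (mT t), hmT t]
    congr 1
    conv_lhs => rw [huT t]
    rw [setIntegral_union (hdT t) ((mT t).inter (mTs 1)) hYν.integrableOn hYν.integrableOn,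
      hcellInt t 0 ht (Or.inl rfl), hcellInt t 1 ht (Or.inr rfl)]
  -- misclassification probabilities in terms of cell masses
  have hm0' : m0W = q 1 0 / (q 0 0 + q 1 0) := by
    rw [hm0, cond_apply' (mT 1) μ]
    have hset : ({ω | Ts ω = 0} ∩ Wb) ∩ {ω | T ω = 1}
        = ({ω | T ω = 1} ∩ {ω | Ts ω = 0}) ∩ Wb := by
      ext ω; simp only [Set.mem_inter_iff, Set.mem_setOf_eq]; tauto
    rw [hset, hmeas _ ((mT 1).inter (mTs 0)), hmeas _ (mTs 0)] -- careful order
    rw [ENNReal.toReal_mul, ENNReal.toReal_inv, hmTs 0, div_eq_inv_mul]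
  have hm1' : m1W = q 0 1 / (q 0 1 + q 1 1) := by
    rw [hm1, cond_apply' (mT 0) μ]
    have hset : ({ω | Ts ω = 1} ∩ Wb) ∩ {ω | T ω = 0}
        = ({ω | T ω = 0} ∩ {ω | Ts ω = 1}) ∩ Wb := by
      ext ω; simp only [Set.mem_inter_iff, Set.mem_setOf_eq]; tauto
    rw [hset, hmeas _ ((mT 0).inter (mTs 1)), hmeas _ (mTs 1)]
    rw [ENNReal.toReal_mul, ENNReal.toReal_inv, hmTs 1, div_eq_inv_mul]
  have hpW' : pW = (q 1 0 + q 1 1) / ((q 0 0 + q 0 1) + (q 1 0 + q 1 1)) := by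
    rw [hpW, cond_apply' (mT 1) μ]
    have hset : Wb ∩ {ω | T ω = 1} = {ω | T ω = 1} ∩ Wb := Set.inter_comm _ _
    have hWuniv : μ Wb = ν Set.univ := by
      rw [← hmeas Set.univ MeasurableSet.univ, Set.univ_inter]
    rw [hset, hmeas _ (mT 1), hWuniv]
    rw [ENNReal.toReal_mul, ENNReal.toReal_inv, hmW, hmT 1, div_eq_inv_mul]
  -- finish with algebra
  have ha := hqpos 0 0 (Or.inl rfl) (Or.inl rfl)
  have hb := hqpos 0 1 (Or.inl rfl) (Or.inr rfl)
  have hc := hqpos 1 0 (Or.inr rfl) (Or.inl rfl)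
  have hd := hqpos 1 1 (Or.inr rfl) (Or.inr rfl)
  rw [hcmT 1 (Or.inr rfl), hcmT 0 (Or.inl rfl), hm0', hm1', hpW']
  have hdet : 1 - q 1 0 / (q 0 0 + q 1 0) - q 0 1 / (q 0 1 + q 1 1) ≠ 0 := by
    rw [hm0', hm1'] at hs; exact hs
  have key := alg_key (q 0 0) (q 0 1) (q 1 0) (q 1 1) y0 y1 ha hb hc hd hdet
  convert key using 3 <;> ring
end

section
/- Let Y, T*, Z be random variables with Z Bernoulli, 0 < Pr(Z=1) < 1, potential outcomes Y_0, Y_1 and potential treatments T*_0, T*_1 all {0,1}-valued for the treatments, satisfying Y = Y_0 + T*(Y_1 - Y_0), T* = T*_0 + Z(T*_1 - T*_0). Assume (Y_1, Y_0, T*_1, T*_0) independent of Z, Pr(T*_1 > T*_0) > 0, and Pr(T*_1 < T*_0) = 0. Then E(Y_1 - Y_0 | T*_1 > T*_0) = [E(Y|Z=1) - E(Y|Z=0)] / [E(T*|Z=1) - E(T*|Z=0)]. -/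
open MeasureTheory ProbabilityTheory

lemma indep_setIntegral {Ω : Type*} [MeasurableSpace Ω] (μ : Measure Ω) [IsProbabilityMeasure μ]
    {α : Type*} [MeasurableSpace α] (W : Ω → α) (Z : Ω → ℝ) (hZ : Measurable Z)
    (hindep : IndepFun W Z μ) (f : α → ℝ) (hf : Measurable f)
    (hfi : Integrable (fun ω => f (W ω)) μ) (c : ℝ) :
    ∫ ω in {ω | Z ω = c}, f (W ω) ∂μ = (μ {ω | Z ω = c}).toReal * ∫ ω, f (W ω) ∂μ := by
  set g : ℝ → ℝ := Set.indicator {c} (fun _ => 1) with hg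
  have hgm : Measurable g := measurable_const.indicator (measurableSet_singleton c)
  have hsm : MeasurableSet {ω | Z ω = c} := hZ (measurableSet_singleton c)
  have hgi : Integrable (fun ω => g (Z ω)) μ := by
    have : (fun ω => g (Z ω)) = Set.indicator {ω | Z ω = c} (fun _ => (1:ℝ)) := by
      funext ω
      by_cases h : Z ω = c <;> simp [g, Set.indicator_apply, h]
    rw [this]
    exact (integrable_const (1:ℝ)).indicator hsm
  have hind2 : IndepFun (fun ω => f (W ω)) (fun ω => g (Z ω)) μ := hindep.comp hf hgm
  have key := hind2.integral_mul_eq_mul_integral hfi.aestronglyMeasurable hgi.aestronglyMeasurable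
  have h1 : ((fun ω => f (W ω)) * (fun ω => g (Z ω))) = Set.indicator {ω | Z ω = c} (fun ω => f (W ω)) := by
    funext ω
    by_cases h : Z ω = c <;> simp [g, Set.indicator_apply, h]
  have h2 : ∫ ω, g (Z ω) ∂μ = (μ {ω | Z ω = c}).toReal := by
    have : (fun ω => g (Z ω)) = Set.indicator {ω | Z ω = c} (fun _ => (1:ℝ)) := by
      funext ω
      by_cases h : Z ω = c <;> simp [g, Set.indicator_apply, h]
    rw [this, integral_indicator_const _ hsm]
    simp [measureReal_def]
  rw [h1, h2, integral_indicator hsm] at key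
  rw [key, mul_comm]

theorem late_identification
    {Ω : Type*} [MeasurableSpace Ω] (μ : Measure Ω) [IsProbabilityMeasure μ]
    (Y0 Y1 Ts0 Ts1 Z : Ω → ℝ)
    (hY0 : Integrable Y0 μ) (hY1 : Integrable Y1 μ)
    (hTs0 : Measurable Ts0) (hTs1 : Measurable Ts1) (hZ : Measurable Z)
    (hmY0 : Measurable Y0) (hmY1 : Measurable Y1)
    (hTs0val : ∀ ω, Ts0 ω = 0 ∨ Ts0 ω = 1) (hTs1val : ∀ ω, Ts1 ω = 0 ∨ Ts1 ω = 1)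
    (hZval : ∀ ω, Z ω = 0 ∨ Z ω = 1)
    (Ts Y : Ω → ℝ)
    (hTs : ∀ ω, Ts ω = Ts0 ω + Z ω * (Ts1 ω - Ts0 ω))
    (hY : ∀ ω, Y ω = Y0 ω + Ts ω * (Y1 ω - Y0 ω))
    -- instrument independence: (Y1, Y0, T*1, T*0) ⫫ Z
    (hindep : IndepFun (fun ω => (Y1 ω, Y0 ω, Ts1 ω, Ts0 ω)) Z μ)
    -- instrument relevance and nondegeneracy
    (hcomplier : 0 < μ {ω | Ts0 ω < Ts1 ω})
    (hZ0 : 0 < μ {ω | Z ω = 1}) (hZ1 : μ {ω | Z ω = 1} < 1)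
    -- monotonicity: no defiers
    (hmono : μ {ω | Ts1 ω < Ts0 ω} = 0) :
    condMean μ (fun ω => Y1 ω - Y0 ω) {ω | Ts0 ω < Ts1 ω}
      = (condMean μ Y {ω | Z ω = 1} - condMean μ Y {ω | Z ω = 0})
        / (condMean μ Ts {ω | Z ω = 1} - condMean μ Ts {ω | Z ω = 0}) := by
  have hW : Measurable (fun ω => (Y1 ω, Y0 ω, Ts1 ω, Ts0 ω)) :=
    (hmY1.prodMk (hmY0.prodMk (hTs1.prodMk hTs0)))
  set W : Ω → ℝ × ℝ × ℝ × ℝ := fun ω => (Y1 ω, Y0 ω, Ts1 ω, Ts0 ω) with hWdef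
  -- bounds
  have hb1 : ∀ ω, ‖Ts1 ω‖ ≤ 1 := fun ω => by rcases hTs1val ω with h|h <;> simp [h]
  have hb0 : ∀ ω, ‖Ts0 ω‖ ≤ 1 := fun ω => by rcases hTs0val ω with h|h <;> simp [h]
  -- integrabilities
  have h1c : Integrable (fun _ : Ω => (1:ℝ)) μ := integrable_const 1
  have hTs1i : Integrable Ts1 μ := by
    have := h1c.bdd_mul hTs1.aestronglyMeasurable (ae_of_all _ hb1)
    simpa using this
  have hTs0i : Integrable Ts0 μ := by
    have := h1c.bdd_mul hTs0.aestronglyMeasurable (ae_of_all _ hb0)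
    simpa using this
  have hp1 : Integrable (fun ω => Ts1 ω * (Y1 ω - Y0 ω)) μ :=
    (hY1.sub hY0).bdd_mul hTs1.aestronglyMeasurable (ae_of_all _ hb1)
  have hp0 : Integrable (fun ω => Ts0 ω * (Y1 ω - Y0 ω)) μ :=
    (hY1.sub hY0).bdd_mul hTs0.aestronglyMeasurable (ae_of_all _ hb0)
  -- the four functions of W
  set f1 : ℝ × ℝ × ℝ × ℝ → ℝ := fun w => w.2.1 + w.2.2.1 * (w.1 - w.2.1) with hf1def
  set f0 : ℝ × ℝ × ℝ × ℝ → ℝ := fun w => w.2.1 + w.2.2.2 * (w.1 - w.2.1) with hf0def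
  set t1 : ℝ × ℝ × ℝ × ℝ → ℝ := fun w => w.2.2.1 with ht1def
  set t0 : ℝ × ℝ × ℝ × ℝ → ℝ := fun w => w.2.2.2 with ht0def
  have hf1m : Measurable f1 := by fun_prop
  have hf0m : Measurable f0 := by fun_prop
  have ht1m : Measurable t1 := by fun_prop
  have ht0m : Measurable t0 := by fun_prop
  have hf1i : Integrable (fun ω => f1 (W ω)) μ := hY0.add hp1
  have hf0i : Integrable (fun ω => f0 (W ω)) μ := hY0.add hp0
  have ht1i : Integrable (fun ω => t1 (W ω)) μ := hTs1i
  have ht0i : Integrable (fun ω => t0 (W ω)) μ := hTs0i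
  -- measure positivity
  have hsm1 : MeasurableSet {ω | Z ω = 1} := hZ (measurableSet_singleton 1)
  have hsm0 : MeasurableSet {ω | Z ω = 0} := hZ (measurableSet_singleton 0)
  have hZ0set : {ω | Z ω = 0} = {ω | Z ω = 1}ᶜ := by
    ext ω
    simp only [Set.mem_setOf_eq, Set.mem_compl_iff]
    rcases hZval ω with h|h <;> simp [h]
  have hμZ0pos : 0 < μ {ω | Z ω = 0} := by
    rw [hZ0set, prob_compl_eq_one_sub hsm1]
    exact tsub_pos_of_lt hZ1
  have d1 : (μ {ω | Z ω = 1}).toReal ≠ 0 :=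
    ENNReal.toReal_ne_zero.2 ⟨hZ0.ne', measure_ne_top μ _⟩
  have d0 : (μ {ω | Z ω = 0}).toReal ≠ 0 :=
    ENNReal.toReal_ne_zero.2 ⟨hμZ0pos.ne', measure_ne_top μ _⟩
  -- condMean computations
  have eY1 : condMean μ Y {ω | Z ω = 1} = ∫ ω, f1 (W ω) ∂μ := by
    unfold condMean
    rw [show ∫ ω in {ω | Z ω = 1}, Y ω ∂μ = ∫ ω in {ω | Z ω = 1}, f1 (W ω) ∂μ from
      setIntegral_congr_fun hsm1 (fun ω hω => by
        simp only [Set.mem_setOf_eq] at hω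
        show Y ω = Y0 ω + Ts1 ω * (Y1 ω - Y0 ω)
        rw [hY, hTs, hω]; ring)]
    rw [indep_setIntegral μ W Z hZ hindep f1 hf1m hf1i 1, mul_comm, mul_div_assoc,
      div_self d1, mul_one]
  have eY0 : condMean μ Y {ω | Z ω = 0} = ∫ ω, f0 (W ω) ∂μ := by
    unfold condMean
    rw [show ∫ ω in {ω | Z ω = 0}, Y ω ∂μ = ∫ ω in {ω | Z ω = 0}, f0 (W ω) ∂μ from
      setIntegral_congr_fun hsm0 (fun ω hω => by
        simp only [Set.mem_setOf_eq] at hω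
        show Y ω = Y0 ω + Ts0 ω * (Y1 ω - Y0 ω)
        rw [hY, hTs, hω]; ring)]
    rw [indep_setIntegral μ W Z hZ hindep f0 hf0m hf0i 0, mul_comm, mul_div_assoc,
      div_self d0, mul_one]
  have eT1 : condMean μ Ts {ω | Z ω = 1} = ∫ ω, t1 (W ω) ∂μ := by
    unfold condMean
    rw [show ∫ ω in {ω | Z ω = 1}, Ts ω ∂μ = ∫ ω in {ω | Z ω = 1}, t1 (W ω) ∂μ from
      setIntegral_congr_fun hsm1 (fun ω hω => by
        simp only [Set.mem_setOf_eq] at hω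
        show Ts ω = Ts1 ω
        rw [hTs, hω]; ring)]
    rw [indep_setIntegral μ W Z hZ hindep t1 ht1m ht1i 1, mul_comm, mul_div_assoc,
      div_self d1, mul_one]
  have eT0 : condMean μ Ts {ω | Z ω = 0} = ∫ ω, t0 (W ω) ∂μ := by
    unfold condMean
    rw [show ∫ ω in {ω | Z ω = 0}, Ts ω ∂μ = ∫ ω in {ω | Z ω = 0}, t0 (W ω) ∂μ from
      setIntegral_congr_fun hsm0 (fun ω hω => by
        simp only [Set.mem_setOf_eq] at hω
        show Ts ω = Ts0 ω
        rw [hTs, hω]; ring)]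
    rw [indep_setIntegral μ W Z hZ hindep t0 ht0m ht0i 0, mul_comm, mul_div_assoc,
      div_self d0, mul_one]
  -- complier set
  have hCmeas : MeasurableSet {ω | Ts0 ω < Ts1 ω} := measurableSet_lt hTs0 hTs1
  have hae : ∀ᵐ ω ∂μ, ¬ Ts1 ω < Ts0 ω := by
    rw [ae_iff]
    simpa using hmono
  -- numerator
  have hnum : (∫ ω, f1 (W ω) ∂μ) - ∫ ω, f0 (W ω) ∂μ
      = ∫ ω in {ω | Ts0 ω < Ts1 ω}, (Y1 ω - Y0 ω) ∂μ := by
    rw [← integral_sub hf1i hf0i, ← integral_indicator hCmeas]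
    apply integral_congr_ae
    filter_upwards [hae] with ω hω
    show (Y0 ω + Ts1 ω * (Y1 ω - Y0 ω)) - (Y0 ω + Ts0 ω * (Y1 ω - Y0 ω)) = _
    rcases hTs0val ω with h0|h0 <;> rcases hTs1val ω with h1|h1
    · simp [Set.indicator_apply, Set.mem_setOf_eq, h0, h1]
    · have hm : ω ∈ {ω | Ts0 ω < Ts1 ω} := by
        show Ts0 ω < Ts1 ω; rw [h0, h1]; norm_num
      rw [Set.indicator_of_mem hm, h0, h1]; ring
    · exact absurd (by rw [h0, h1]; norm_num) hω
    · simp [Set.indicator_apply, Set.mem_setOf_eq, h0, h1]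
  -- denominator
  have hden : (∫ ω, t1 (W ω) ∂μ) - ∫ ω, t0 (W ω) ∂μ
      = (μ {ω | Ts0 ω < Ts1 ω}).toReal := by
    have hI : ∫ ω, Set.indicator {ω | Ts0 ω < Ts1 ω} (fun _ => (1:ℝ)) ω ∂μ
        = (μ {ω | Ts0 ω < Ts1 ω}).toReal := by
      rw [integral_indicator_const _ hCmeas]; simp [measureReal_def]
    rw [← integral_sub ht1i ht0i, ← hI]
    apply integral_congr_ae
    filter_upwards [hae] with ω hω
    show Ts1 ω - Ts0 ω = _
    rcases hTs0val ω with h0|h0 <;> rcases hTs1val ω with h1|h1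
    · simp [Set.indicator_apply, Set.mem_setOf_eq, h0, h1]
    · have hm : ω ∈ {ω | Ts0 ω < Ts1 ω} := by
        show Ts0 ω < Ts1 ω; rw [h0, h1]; norm_num
      rw [Set.indicator_of_mem hm, h0, h1]; ring
    · exact absurd (by rw [h0, h1]; norm_num) hω
    · simp [Set.indicator_apply, Set.mem_setOf_eq, h0, h1]
  rw [eY1, eY0, eT1, eT0, hnum, hden]
  rfl
end

section
/- Under the LATE assumptions (Z independent of potential outcomes/treatments, Pr(complier) > 0, no defiers), the denominator E(T*|Z=1) - E(T*|Z=0) equals Pr(T*_1 > T*_0) > 0; in particular it is nonzero. -/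
open MeasureTheory ProbabilityTheory

lemma setIntegral_binary {Ω : Type*} [MeasurableSpace Ω] (μ : Measure Ω)
    (f : Ω → ℝ) (hval : ∀ ω, f ω = 0 ∨ f ω = 1) {s : Set Ω}
    (hA : MeasurableSet {ω | f ω = 1}) :
    ∫ ω in s, f ω ∂μ = (μ (s ∩ {ω | f ω = 1})).toReal := by
  have heq : ∀ ω, f ω = Set.indicator {ω | f ω = 1} (fun _ => (1:ℝ)) ω := by
    intro ω; rcases hval ω with h | h <;> simp [Set.indicator, h]
  calc ∫ ω in s, f ω ∂μ
      = ∫ ω in s, Set.indicator {ω | f ω = 1} (fun _ => (1:ℝ)) ω ∂μ := by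
        exact integral_congr_ae (Filter.Eventually.of_forall fun ω => heq ω)
    _ = ∫ _ in s ∩ {ω | f ω = 1}, (1:ℝ) ∂μ := setIntegral_indicator hA
    _ = (μ (s ∩ {ω | f ω = 1})).toReal := by simp; rfl

theorem first_stage_equals_complier_probability
    {Ω : Type*} [MeasurableSpace Ω] (μ : Measure Ω) [IsProbabilityMeasure μ]
    (Ts0 Ts1 Z : Ω → ℝ)
    (hTs0 : Measurable Ts0) (hTs1 : Measurable Ts1) (hZ : Measurable Z)
    (hTs0val : ∀ ω, Ts0 ω = 0 ∨ Ts0 ω = 1) (hTs1val : ∀ ω, Ts1 ω = 0 ∨ Ts1 ω = 1)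
    (hZval : ∀ ω, Z ω = 0 ∨ Z ω = 1)
    (Ts : Ω → ℝ) (hTs : ∀ ω, Ts ω = Ts0 ω + Z ω * (Ts1 ω - Ts0 ω))
    (hindep : IndepFun (fun ω => (Ts0 ω, Ts1 ω)) Z μ)
    (hZ0 : 0 < μ {ω | Z ω = 1}) (hZ1 : μ {ω | Z ω = 1} < 1)
    (hmono : μ {ω | Ts1 ω < Ts0 ω} = 0)
    (hcomplier : 0 < μ {ω | Ts0 ω < Ts1 ω}) :
    condMean μ Ts {ω | Z ω = 1} - condMean μ Ts {ω | Z ω = 0}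
      = (μ {ω | Ts0 ω < Ts1 ω}).toReal
    ∧ 0 < condMean μ Ts {ω | Z ω = 1} - condMean μ Ts {ω | Z ω = 0} := by
  set A0 : Set Ω := {ω | Ts0 ω = 1} with hA0def
  set A1 : Set Ω := {ω | Ts1 ω = 1} with hA1def
  set S1 : Set Ω := {ω | Z ω = 1} with hS1def
  set S0 : Set Ω := {ω | Z ω = 0} with hS0def
  set C : Set Ω := {ω | Ts0 ω < Ts1 ω} with hCdef
  have hA0m : MeasurableSet A0 := hTs0 (measurableSet_singleton 1)
  have hA1m : MeasurableSet A1 := hTs1 (measurableSet_singleton 1)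
  have hS1m : MeasurableSet S1 := hZ (measurableSet_singleton 1)
  have hS0m : MeasurableSet S0 := hZ (measurableSet_singleton 0)
  -- independence facts
  have hi1 : μ (A1 ∩ S1) = μ A1 * μ S1 := by
    have := hindep.measure_inter_preimage_eq_mul (Set.univ ×ˢ {(1:ℝ)}) {(1:ℝ)}
      (MeasurableSet.univ.prod (measurableSet_singleton 1)) (measurableSet_singleton 1)
    have h1 : (fun ω => (Ts0 ω, Ts1 ω)) ⁻¹' (Set.univ ×ˢ {(1:ℝ)}) = A1 := by
      ext ω; simp [hA1def, eq_comm]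
    have h2 : Z ⁻¹' {(1:ℝ)} = S1 := rfl
    rwa [h1, h2] at this
  have hi0 : μ (A0 ∩ S0) = μ A0 * μ S0 := by
    have := hindep.measure_inter_preimage_eq_mul ({(1:ℝ)} ×ˢ Set.univ) {(0:ℝ)}
      ((measurableSet_singleton 1).prod MeasurableSet.univ) (measurableSet_singleton 0)
    have h1 : (fun ω => (Ts0 ω, Ts1 ω)) ⁻¹' ({(1:ℝ)} ×ˢ Set.univ) = A0 := by
      ext ω; simp [hA0def, eq_comm]
    have h2 : Z ⁻¹' {(0:ℝ)} = S0 := rfl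
    rwa [h1, h2] at this
  -- measures of Z-events
  have hS0compl : S0 = S1ᶜ := by
    ext ω; rcases hZval ω with h | h <;> simp [hS0def, hS1def, h]
  have hμS0 : μ S0 = 1 - μ S1 := by
    rw [hS0compl, prob_compl_eq_one_sub hS1m]
  have hS1ne : (μ S1).toReal ≠ 0 := by
    have := measure_lt_top μ S1
    simp only [ENNReal.toReal_ne_zero]
    exact ⟨hZ0.ne', this.ne⟩
  have hS0pos : 0 < μ S0 := by rw [hμS0]; exact tsub_pos_of_lt hZ1
  have hS0ne : (μ S0).toReal ≠ 0 := by
    have := measure_lt_top μ S0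
    simp only [ENNReal.toReal_ne_zero]
    exact ⟨hS0pos.ne', this.ne⟩
  -- conditional means
  have hc1 : condMean μ Ts S1 = (μ A1).toReal := by
    have heq : ∫ ω in S1, Ts ω ∂μ = ∫ ω in S1, Ts1 ω ∂μ := by
      refine setIntegral_congr_fun hS1m fun ω hω => ?_
      have hz : Z ω = 1 := hω
      rw [hTs ω, hz]; ring
    rw [condMean, heq, setIntegral_binary μ Ts1 hTs1val hA1m, Set.inter_comm, hi1,
      ENNReal.toReal_mul, mul_div_assoc, div_self hS1ne, mul_one]
  have hc0 : condMean μ Ts S0 = (μ A0).toReal := by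
    have heq : ∫ ω in S0, Ts ω ∂μ = ∫ ω in S0, Ts0 ω ∂μ := by
      refine setIntegral_congr_fun hS0m fun ω hω => ?_
      have hz : Z ω = 0 := hω
      rw [hTs ω, hz]; ring
    rw [condMean, heq, setIntegral_binary μ Ts0 hTs0val hA0m, Set.inter_comm, hi0,
      ENNReal.toReal_mul, mul_div_assoc, div_self hS0ne, mul_one]
  -- set decompositions
  have hC : A1 \ A0 = C := by
    ext ω
    rcases hTs0val ω with h0 | h0 <;> rcases hTs1val ω with h1 | h1 <;>
      simp [hA0def, hA1def, hCdef, h0, h1]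
  have hD : A0 \ A1 = {ω | Ts1 ω < Ts0 ω} := by
    ext ω
    rcases hTs0val ω with h0 | h0 <;> rcases hTs1val ω with h1 | h1 <;>
      simp [hA0def, hA1def, h0, h1]
  have hμA1 : μ A1 = μ (A1 ∩ A0) + μ C := by
    rw [← hC, measure_inter_add_diff A1 hA0m]
  have hμA0 : μ A0 = μ (A1 ∩ A0) := by
    have : μ A0 = μ (A0 ∩ A1) + μ (A0 \ A1) := (measure_inter_add_diff A0 hA1m).symm
    rw [this, hD, hmono, add_zero, Set.inter_comm]
  have hkey : (μ A1).toReal - (μ A0).toReal = (μ C).toReal := by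
    rw [hμA1, hμA0, ENNReal.toReal_add (measure_lt_top μ _).ne (measure_lt_top μ _).ne]
    ring
  have hmain : condMean μ Ts S1 - condMean μ Ts S0 = (μ C).toReal := by
    rw [hc1, hc0, hkey]
  refine ⟨hmain, ?_⟩
  rw [hmain]
  exact ENNReal.toReal_pos hcomplier.ne' (measure_lt_top μ C).ne
end
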